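/- arXiv:1407.5402 — 3 statements merged into one kernel-verified Lean document; each statement's English description precedes it below -/
import Mathlib

section
/- Let V_β(r) = −(1/2)((λβ/4) sinh(r) + log cosh(r)) for λ > 0 and β > 0 small. Then V_β'(r) = 0 if and only if λβ/8 = (e^{−r} − e^{r})/(e^r + e^{−r})², and as β → 0 the local minimum a_β of V_β satisfies a_β = log β + log λ − 3 log 2 + O(β²). -/
open Real Filter Asymptotics Topology

/-- The potential `V_β(r) = −(1/2)((λβ/4) sinh r + log cosh r)`. -/
noncomputable def Vpot (lam β r : ℝ) : ℝ :=
  -(1 / 2) * (lam * (β / 4) * Real.sinh r + Real.log (Real.cosh r))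

lemma hasDerivAt_Vpot (lam β r : ℝ) :
    HasDerivAt (Vpot lam β)
      (-(1 / 2) * (lam * (β / 4) * Real.cosh r + Real.sinh r / Real.cosh r)) r := by
  have h1 : HasDerivAt (fun r => lam * (β / 4) * Real.sinh r)
      (lam * (β / 4) * Real.cosh r) r := (Real.hasDerivAt_sinh r).const_mul _
  have h2 : HasDerivAt (fun r => Real.log (Real.cosh r)) (Real.sinh r / Real.cosh r) r :=
    (Real.hasDerivAt_cosh r).log (Real.cosh_pos r).ne'
  exact ((h1.add h2).const_mul (-(1/2) : ℝ))

noncomputable def gfun (lam β r : ℝ) : ℝ :=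
  lam * (β / 4) * Real.cosh r + Real.sinh r / Real.cosh r

lemma hasDerivAt_g (lam β r : ℝ) :
    HasDerivAt (gfun lam β)
      (lam * (β / 4) * Real.sinh r + 1 / Real.cosh r ^ 2) r := by
  unfold gfun
  have h1 : HasDerivAt (fun r => lam * (β / 4) * Real.cosh r)
      (lam * (β / 4) * Real.sinh r) r := (Real.hasDerivAt_cosh r).const_mul _
  have h2 : HasDerivAt (fun r => Real.sinh r / Real.cosh r)
      ((Real.cosh r * Real.cosh r - Real.sinh r * Real.sinh r) / Real.cosh r ^ 2) r :=
    (Real.hasDerivAt_sinh r).div (Real.hasDerivAt_cosh r) (Real.cosh_pos r).ne'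
  have h3 : Real.cosh r * Real.cosh r - Real.sinh r * Real.sinh r = 1 := by
    nlinarith [Real.cosh_sq_sub_sinh_sq r]
  rw [h3] at h2
  exact h1.add h2

set_option maxHeartbeats 1000000 in
lemma key (lam β a : ℝ) (hlam : 0 < lam) (hβ : 0 < β)
    (hmin : IsLocalMin (Vpot lam β) a) (hneg : a < 0) :
    |a - (Real.log β + Real.log lam - 3 * Real.log 2)| ≤ 8 * (25 * lam / 96) ^ 2 * β ^ 2 := by
  set f := Vpot lam β with hf
  set g : ℝ → ℝ := gfun lam β with hgdef
  set x := Real.exp a with hx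
  have hx0 : 0 < x := Real.exp_pos a
  have hx1 : x < 1 := by rw [hx, Real.exp_lt_one_iff]; exact hneg
  have ha' : a = Real.log x := by rw [hx, Real.log_exp]
  have e1 : Real.sinh a = (x ^ 2 - 1) / (2 * x) := by
    rw [Real.sinh_eq, Real.exp_neg, ← hx]; field_simp
  have e2 : Real.cosh a = (1 + x ^ 2) / (2 * x) := by
    rw [Real.cosh_eq, Real.exp_neg, ← hx]; field_simp; ring
  -- derivative facts
  have hfd : ∀ r, HasDerivAt f (-(1 / 2) * g r) r := by
    intro r
    have h0 : -(1 / 2) * g r = -(1 / 2) * (lam * (β / 4) * Real.cosh r + Real.sinh r / Real.cosh r) := by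
      rw [hgdef]; rfl
    rw [h0]; exact hasDerivAt_Vpot lam β r
  have hgd : ∀ r, HasDerivAt g (lam * (β / 4) * Real.sinh r + 1 / Real.cosh r ^ 2) r :=
    fun r => hasDerivAt_g lam β r
  have hDval : lam * (β / 4) * Real.sinh a + 1 / Real.cosh a ^ 2
      = (lam * β * (x ^ 2 - 1) * (1 + x ^ 2) ^ 2 + 32 * x ^ 3) / (8 * x * (1 + x ^ 2) ^ 2) := by
    rw [e1, e2]
    have h12 : (0:ℝ) < 1 + x ^ 2 := by positivity
    field_simp
    ring
  -- critical point equation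
  have hd0 : deriv f a = 0 := hmin.deriv_eq_zero
  have hga : g a = 0 := by
    have h1 := (hfd a).deriv
    rw [hd0] at h1
    have h2 : g a = (-2) * (-(1 / 2) * g a) := by ring
    rw [h2, ← h1]; ring
  have hga' : lam * (β / 4) * Real.cosh a + Real.sinh a / Real.cosh a = 0 := by
    have h0 := hga; rw [hgdef] at h0; exact h0
  have heq : lam * β * (1 + x ^ 2) ^ 2 = 8 * x * (1 - x ^ 2) := by
    have h1 : lam * (β / 4) * ((1 + x ^ 2) / (2 * x)) + (x ^ 2 - 1) / (2 * x) / ((1 + x ^ 2) / (2 * x)) = 0 := by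
      rw [← e1, ← e2]; exact hga' 
    have h12 : (0:ℝ) < 1 + x ^ 2 := by positivity
    field_simp at h1
    nlinarith [h1]
  clear_value x
  -- second order condition
  have hxhalf : x ≤ 1 / 2 := by
    by_contra hx2
    push_neg at hx2
    have hA : (0:ℝ) < x ^ 2 + 2 * x - 1 := by nlinarith
    have hB : (0:ℝ) < 1 + 2 * x - x ^ 2 := by nlinarith
    have hid : lam * β * (x ^ 2 - 1) * (1 + x ^ 2) ^ 2 + 32 * x ^ 3
        = 8 * x * (x ^ 2 + 2 * x - 1) * (1 + 2 * x - x ^ 2) := by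
      linear_combination (x ^ 2 - 1) * heq
    have hDpos : 0 < lam * (β / 4) * Real.sinh a + 1 / Real.cosh a ^ 2 := by
      rw [hDval, hid]
      exact div_pos (by positivity) (by positivity)
    have hslope : Tendsto (slope g a) (𝓝[≠] a) (𝓝 (lam * (β / 4) * Real.sinh a + 1 / Real.cosh a ^ 2)) :=
      hasDerivAt_iff_tendsto_slope.mp (hgd a)
    have h1 : ∀ᶠ r in 𝓝[≠] a, 0 < slope g a r := hslope.eventually (eventually_gt_nhds hDpos)
    have h2 : ∀ᶠ r in 𝓝[>] a, 0 < g r := by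
      have h1' : ∀ᶠ r in 𝓝[>] a, 0 < slope g a r :=
        h1.filter_mono (nhdsWithin_mono a (fun r hr => ne_of_gt hr))
      filter_upwards [h1', self_mem_nhdsWithin] with r hr hra
      have hra' : 0 < r - a := sub_pos.mpr hra
      have hs : slope g a r = g r / (r - a) := by rw [slope_def_field, hga]; ring_nf
      rw [hs] at hr
      rcases div_pos_iff.mp hr with ⟨h, _⟩ | ⟨_, h⟩
      · exact h
      · linarith
    have h3 : ∀ᶠ r in 𝓝[>] a, f a ≤ f r := hmin.filter_mono nhdsWithin_le_nhds
    obtain ⟨u, hu, hsub⟩ := mem_nhdsGT_iff_exists_Ioc_subset.mp (h2.and h3)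
    have hau : a < u := hu
    have hanti : StrictAntiOn f (Set.Icc a u) := by
      apply strictAntiOn_of_deriv_neg (convex_Icc a u)
      · exact fun r _ => (hfd r).differentiableAt.continuousAt.continuousWithinAt
      · intro r hr
        rw [interior_Icc] at hr
        have hgr : 0 < g r := (hsub ⟨hr.1, le_of_lt hr.2⟩).1
        rw [(hfd r).deriv]
        linarith [hgr]
    have h4 : f u < f a := hanti (Set.left_mem_Icc.mpr hau.le) (Set.right_mem_Icc.mpr hau.le) hau
    have h5 : f a ≤ f u := (hsub ⟨hau, le_refl u⟩).2
    linarith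
  -- bounds on x
  have hlb0 : (0:ℝ) ≤ lam * β := (mul_pos hlam hβ).le
  have hxl : lam * β ≤ 8 * x := by
    nlinarith [heq, mul_nonneg hlb0 (sq_nonneg x), mul_nonneg hlb0 (sq_nonneg (x ^ 2)),
      mul_nonneg hx0.le (sq_nonneg x)]
  have hxu : x ≤ 25 * lam * β / 96 := by
    have t3 : 6 * x ≤ 8 * x * (1 - x ^ 2) := by
      nlinarith [mul_nonneg hx0.le (show (0:ℝ) ≤ 1 - 4 * x ^ 2 by nlinarith)]
    have t4 : lam * β * (1 + x ^ 2) ^ 2 ≤ 25 / 16 * (lam * β) := by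
      have h5 : (1 + x ^ 2) ^ 2 ≤ 25 / 16 := by nlinarith [hx0, hxhalf]
      nlinarith [mul_le_mul_of_nonneg_left h5 hlb0]
    linarith
  -- the log computation
  have hL : Real.log β + Real.log lam - 3 * Real.log 2 = Real.log (lam * β / 8) := by
    rw [Real.log_div (by positivity) (by norm_num), Real.log_mul hlam.ne' hβ.ne']
    have h8 : Real.log 8 = 3 * Real.log 2 := by
      rw [show (8:ℝ) = 2 ^ 3 by norm_num, Real.log_pow]; push_cast; ring
    rw [h8]; ring
  have hdiff : a - (Real.log β + Real.log lam - 3 * Real.log 2)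
      = Real.log (8 * x / (lam * β)) := by
    rw [hL, ha', ← Real.log_div hx0.ne' (by positivity)]
    congr 1
    field_simp
  have hu1 : (1:ℝ) ≤ 8 * x / (lam * β) := by
    rw [le_div_iff₀ (by positivity)]; linarith
  have hlow : 0 ≤ a - (Real.log β + Real.log lam - 3 * Real.log 2) := by
    rw [hdiff]; exact Real.log_nonneg hu1
  have hup : a - (Real.log β + Real.log lam - 3 * Real.log 2) ≤ 8 * (25 * lam / 96) ^ 2 * β ^ 2 := by
    rw [hdiff]
    have h6 : Real.log (8 * x / (lam * β)) ≤ 8 * x / (lam * β) - 1 :=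
      Real.log_le_sub_one_of_pos (by positivity)
    have h12 : (0:ℝ) < (1 + x ^ 2) ^ 2 := by positivity
    have e3 : 8 * x ^ 2 * (lam * β) * (1 + x ^ 2) ^ 2 - (8 * x - lam * β) * (1 + x ^ 2) ^ 2
        = 8 * x ^ 3 * (5 - 9 * x ^ 2) := by
      linear_combination (8 * x ^ 2 + 1) * heq
    have e4 : (0:ℝ) ≤ 8 * x ^ 3 * (5 - 9 * x ^ 2) := by
      apply mul_nonneg (by positivity)
      nlinarith [hxhalf, hx0]
    have e5 : 8 * x - lam * β ≤ 8 * x ^ 2 * (lam * β) := by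
      have := le_of_sub_nonneg (e3 ▸ e4)
      exact le_of_mul_le_mul_right this h12
    have h7 : 8 * x / (lam * β) - 1 ≤ 8 * x ^ 2 := by
      rw [div_sub_one (by positivity), div_le_iff₀ (by positivity)]
      nlinarith [e5]
    have h8 : 8 * x ^ 2 ≤ 8 * (25 * lam / 96) ^ 2 * β ^ 2 := by
      have h9 := mul_le_mul hxu hxu hx0.le (by positivity)
      nlinarith [h9]
    linarith
  rw [abs_of_nonneg hlow]
  exact hup

lemma part1' (lam β : ℝ) (r : ℝ) :
    deriv (Vpot lam β) r = 0 ↔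
      lam * β / 8 = (Real.exp (-r) - Real.exp r) / (Real.exp r + Real.exp (-r)) ^ 2 := by
  rw [(hasDerivAt_Vpot lam β r).deriv, Real.cosh_eq, Real.sinh_eq]
  have hE : 0 < Real.exp r := Real.exp_pos r
  have hF : 0 < Real.exp (-r) := Real.exp_pos _
  have hEF : Real.exp r * Real.exp (-r) = 1 := by rw [← Real.exp_add]; simp
  set E := Real.exp r
  set F := Real.exp (-r)
  constructor
  · intro h
    field_simp at h ⊢
    nlinarith [sq_nonneg (E + F), h]
  · intro h
    field_simp at h ⊢
    nlinarith [sq_nonneg (E + F), h]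

/-- Critical point characterization of `V_β` and the asymptotic expansion
`a_β = log β + log λ − 3 log 2 + O(β²)` of the local minimum as `β → 0`. -/
theorem stmt_2 (lam : ℝ) (hlam : 0 < lam) :
    (∀ β r : ℝ, 0 < β →
      (deriv (Vpot lam β) r = 0 ↔
        lam * β / 8 = (Real.exp (-r) - Real.exp r) / (Real.exp r + Real.exp (-r)) ^ 2)) ∧
    ∀ a : ℝ → ℝ, (∀ᶠ β in 𝓝[>] (0 : ℝ), IsLocalMin (Vpot lam β) (a β) ∧ a β < 0) →
      (fun β => a β - (Real.log β + Real.log lam - 3 * Real.log 2))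
        =O[𝓝[>] (0 : ℝ)] fun β => β ^ 2 := by
  constructor
  · exact fun β r _ => part1' lam β r
  · intro a ha
    rw [isBigO_iff]
    refine ⟨8 * (25 * lam / 96) ^ 2, ?_⟩
    filter_upwards [ha, self_mem_nhdsWithin] with β hβ1 hβ2
    have hβ : 0 < β := hβ2
    have := key lam β (a β) hlam hβ hβ1.1 hβ1.2
    rw [Real.norm_eq_abs, Real.norm_eq_abs]
    calc |a β - (Real.log β + Real.log lam - 3 * Real.log 2)|
        ≤ 8 * (25 * lam / 96) ^ 2 * β ^ 2 := this
      _ ≤ 8 * (25 * lam / 96) ^ 2 * |β ^ 2| := by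
          apply mul_le_mul_of_nonneg_left (le_abs_self _) (by positivity)
end

section
/- The value of V_β at its local minimum satisfies V_β(a_β) = (1/2) log β + (1/2) log λ − log 2 + 1/2 + O(β²) as β → 0. -/
/-! Substituting `r = log c + ε` with `c = λβ/8` gives `e^r = c e^ε`, and then `V_β(r)` equals
`(1/2) log c + (1/2) log 2 + 1/2 - (1/2) R(c, ε)` with
`R(c, ε) = c² e^ε + (1 - e^{-ε}) - ε + log (1 + c² e^{2ε})` (`vpotRemainder`). For `|ε| ≤ 1`
every term of `R` is `O(c² + |ε|)`, and the expansion of `a_β` makes both `c²` and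
`ε = a_β - log c` of order `β²`. -/

open Real Filter Asymptotics Topology

noncomputable def vpotRemainder (c ε : ℝ) : ℝ :=
  c ^ 2 * exp ε + (1 - exp (-ε)) - ε + log (1 + (c * exp ε) ^ 2)

theorem Vpot_log_add (lam β c ε : ℝ) (hc : 0 < c) (hlamβ : lam * β = 8 * c) :
    Vpot lam β (log c + ε) - (1 / 2 * log c + 1 / 2 * log 2 + 1 / 2)
      = -(1 / 2) * vpotRemainder c ε := by
  have hexp : exp (log c + ε) = c * exp ε := by rw [exp_add, exp_log hc]
  have hcosh : cosh (log c + ε) = (1 + (c * exp ε) ^ 2) / (2 * (c * exp ε)) := by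
    rw [cosh_eq, exp_neg, hexp]
    field_simp
    ring
  have hsinh : lam * (β / 4) * sinh (log c + ε) = c ^ 2 * exp ε - exp (-ε) := by
    rw [sinh_eq, exp_neg, hexp, exp_neg, show lam * (β / 4) = 2 * c by linarith]
    field_simp
  rw [Vpot, vpotRemainder, hsinh, hcosh, log_div (by positivity) (by positivity),
    log_mul two_ne_zero (by positivity), log_mul hc.ne' (exp_pos ε).ne', log_exp]
  ring

theorem abs_vpotRemainder_le (c ε : ℝ) (hε : |ε| ≤ 1) :
    |vpotRemainder c ε| ≤ 12 * c ^ 2 + 3 * |ε| := by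
  have hexp_le : exp ε ≤ 3 := by
    calc exp ε ≤ exp 1 := exp_le_exp.mpr (abs_le.mp hε).2
      _ ≤ 3 := exp_one_lt_d9.le.trans (by norm_num)
  have hsq_le : (c * exp ε) ^ 2 ≤ 9 * c ^ 2 := by
    have h9 : exp ε ^ 2 ≤ 9 := by nlinarith [exp_pos ε]
    rw [mul_pow]
    nlinarith [sq_nonneg c]
  have hlog_nonneg : 0 ≤ log (1 + (c * exp ε) ^ 2) :=
    log_nonneg (by nlinarith [sq_nonneg (c * exp ε)])
  have hlog_le : log (1 + (c * exp ε) ^ 2) ≤ (c * exp ε) ^ 2 := by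
    linarith [log_le_sub_one_of_pos (by positivity : 0 < 1 + (c * exp ε) ^ 2)]
  have hfirst : 0 ≤ c ^ 2 * exp ε ∧ c ^ 2 * exp ε ≤ 3 * c ^ 2 :=
    ⟨by positivity, by nlinarith [sq_nonneg c]⟩
  have hmid : |exp (-ε) - 1| ≤ 2 * |ε| := by
    simpa using abs_exp_sub_one_le (x := -ε) (by rwa [abs_neg])
  rw [vpotRemainder, abs_le]
  rw [abs_le] at hmid
  constructor <;> cases abs_cases ε <;> linarith

theorem log_mul_div_eight {lam β : ℝ} (hlam : 0 < lam) (hβ : 0 < β) :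
    log (lam * β / 8) = log β + log lam - 3 * log 2 := by
  rw [log_div (by positivity) (by norm_num), log_mul hlam.ne' hβ.ne',
    show (8 : ℝ) = 2 ^ 3 by norm_num, log_pow]
  push_cast
  ring

theorem Vpot_sub_eq {lam β r ε : ℝ} (hlam : 0 < lam) (hβ : 0 < β)
    (hε : ε = r - (log β + log lam - 3 * log 2)) :
    Vpot lam β r - (1 / 2 * log β + 1 / 2 * log lam - log 2 + 1 / 2)
      = -(1 / 2) * vpotRemainder (lam * β / 8) ε := by
  subst hε
  have h := Vpot_log_add lam β (lam * β / 8) (r - (log β + log lam - 3 * log 2))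
    (by positivity) (by ring)
  rw [log_mul_div_eight hlam hβ, add_sub_cancel] at h
  linear_combination h

theorem stmt_4_general (lam : ℝ) (hlam : 0 < lam) (a : ℝ → ℝ)
    (hexp : (fun β => a β - (Real.log β + Real.log lam - 3 * Real.log 2))
      =O[𝓝[>] (0 : ℝ)] fun β => β ^ 2) :
    (fun β => Vpot lam β (a β) -
        (1 / 2 * Real.log β + 1 / 2 * Real.log lam - Real.log 2 + 1 / 2))
      =O[𝓝[>] (0 : ℝ)] fun β => β ^ 2 := by
  set ε := fun β => a β - (log β + log lam - 3 * log 2)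
  have hε_small : ∀ᶠ β in 𝓝[>] 0, |ε β| ≤ 1 := by
    have hsq : Tendsto (fun β : ℝ => β ^ 2) (𝓝[>] 0) (𝓝 0) :=
      ((continuous_pow 2).tendsto' 0 0 (zero_pow two_ne_zero)).mono_left nhdsWithin_le_nhds
    simpa using ((hexp.trans_tendsto hsq).abs.eventually_lt_const (by simp)).mono fun _ h => h.le
  have hbound : (fun β => Vpot lam β (a β) - (1 / 2 * log β + 1 / 2 * log lam - log 2 + 1 / 2))
      =O[𝓝[>] 0] fun β => 12 * (lam / 8) ^ 2 * β ^ 2 + 3 * |ε β| := by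
    refine IsBigO.of_bound (1 / 2) ?_
    filter_upwards [self_mem_nhdsWithin, hε_small] with β (hβ : 0 < β) hεβ
    rw [Vpot_sub_eq hlam hβ rfl, norm_eq_abs, norm_eq_abs, abs_mul, abs_neg,
      abs_of_pos one_half_pos,
      abs_of_nonneg (by positivity : 0 ≤ 12 * (lam / 8) ^ 2 * β ^ 2 + 3 * |ε β|)]
    gcongr
    exact (abs_vpotRemainder_le (lam * β / 8) (ε β) hεβ).trans_eq (by ring)
  exact hbound.trans (((isBigO_refl _ _).const_mul_left _).add (hexp.abs_left.const_mul_left 3))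

/-- The value of `V_β` at its local minimum `a_β` (with expansion
`a_β = log β + log λ − 3 log 2 + O(β²)`) satisfies
`V_β(a_β) = (1/2) log β + (1/2) log λ − log 2 + 1/2 + O(β²)` as `β → 0`. -/
theorem stmt_4 (lam : ℝ) (hlam : 0 < lam) (a : ℝ → ℝ)
    (ha : ∀ᶠ β in 𝓝[>] (0 : ℝ), IsLocalMin (Vpot lam β) (a β))
    (hexp : (fun β => a β - (Real.log β + Real.log lam - 3 * Real.log 2))
      =O[𝓝[>] (0 : ℝ)] fun β => β ^ 2) :
    (fun β => Vpot lam β (a β) -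
        (1 / 2 * Real.log β + 1 / 2 * Real.log lam - Real.log 2 + 1 / 2))
      =O[𝓝[>] (0 : ℝ)] fun β => β ^ 2 :=
  stmt_4_general lam hlam a hexp
end

section
/- With t_β as above and any family of starting points r_β → −∞, t_β(r_β) ∼ 8π/(βλ) as β → 0, i.e. βλ t_β(r_β)/(8π) → 1. -/
/-!
With `c = λβ/4` one has `exp (-2 V_β y) = cosh y · exp (c sinh y)`, whose antiderivative
`exp (c sinh y) / c` vanishes at `-∞`. Hence the inner integral of `t_β` equals `1 / (c cosh x)`,
and since `arctan ∘ sinh` is a primitive of `1 / cosh`,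
`t_β(r) = (8 / (λβ)) (π/2 - arctan (sinh r))` exactly. As `r → -∞` the bracket tends to `π`.
-/

open Real Filter Topology Set MeasureTheory

/-- The mean exit time `t_β(r) = 2 ∫_r^∞ ∫_{−∞}^x exp(2[V_β(x) − V_β(y)]) dy dx`. -/
noncomputable def meanExit (lam β r : ℝ) : ℝ :=
  2 * ∫ x in Ioi r, ∫ y in Iic x, Real.exp (2 * (Vpot lam β x - Vpot lam β y))

theorem Real.tendsto_sinh_atTop : Tendsto sinh atTop atTop :=
  sinhOrderIso.tendsto_atTop

theorem Real.tendsto_sinh_atBot : Tendsto sinh atBot atBot :=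
  sinhOrderIso.tendsto_atBot

theorem integral_Iic_cosh_mul_exp_mul_sinh {c : ℝ} (hc : 0 < c) (x : ℝ) :
    ∫ y in Iic x, cosh y * exp (c * sinh y) = exp (c * sinh x) / c := by
  have hderiv : ∀ y : ℝ, HasDerivAt (fun y => -exp (-(c * sinh y)) / c)
      (cosh y * exp (-(c * sinh y))) y := fun y => by
    refine ((((hasDerivAt_sinh y).const_mul c).neg.exp).neg.div_const c).congr_deriv ?_
    simp only [Pi.neg_apply]
    field_simp
  have hlim : Tendsto (fun y => -exp (-(c * sinh y)) / c) atTop (𝓝 0) := by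
    have := (tendsto_exp_atBot.comp (tendsto_neg_atTop_atBot.comp
      (tendsto_sinh_atTop.const_mul_atTop hc))).neg.div_const c
    simpa using this
  -- on `Ioi`, a nonnegative derivative with a limit at `∞` is integrable automatically
  have hreflect := integral_comp_neg_Ioi (-x) fun y => cosh y * exp (c * sinh y)
  simp only [neg_neg, cosh_neg, sinh_neg, mul_neg] at hreflect
  rw [← hreflect, integral_Ioi_of_hasDerivAt_of_nonneg' (fun y _ => hderiv y)
    (fun y _ => by positivity) hlim]
  simp [neg_div]

theorem integral_Ioi_inv_cosh (r : ℝ) :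
    ∫ x in Ioi r, (cosh x)⁻¹ = π / 2 - arctan (sinh r) := by
  have hderiv : ∀ x : ℝ, HasDerivAt (fun x => arctan (sinh x)) (cosh x)⁻¹ x := fun x => by
    refine ((hasDerivAt_arctan (sinh x)).comp x (hasDerivAt_sinh x)).congr_deriv ?_
    have := (cosh_pos x).ne'
    rw [← cosh_sq']
    field_simp
  have hlim : Tendsto (fun x => arctan (sinh x)) atTop (𝓝 (π / 2)) :=
    (tendsto_nhds_of_tendsto_nhdsWithin tendsto_arctan_atTop).comp tendsto_sinh_atTop
  exact integral_Ioi_of_hasDerivAt_of_nonneg' (fun x _ => hderiv x)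
    (fun x _ => by positivity) hlim

theorem exp_neg_two_mul_Vpot (lam β y : ℝ) :
    exp (-2 * Vpot lam β y) = cosh y * exp (lam * (β / 4) * sinh y) := by
  rw [Vpot, show -2 * (-(1 / 2) * (lam * (β / 4) * sinh y + log (cosh y)))
      = log (cosh y) + lam * (β / 4) * sinh y by ring, exp_add, exp_log (cosh_pos y)]

theorem integral_Iic_exp_two_mul_Vpot_sub {lam β : ℝ} (hc : 0 < lam * β) (x : ℝ) :
    ∫ y in Iic x, exp (2 * (Vpot lam β x - Vpot lam β y)) = 4 / (lam * β) * (cosh x)⁻¹ := by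
  have hsplit : ∀ y, exp (2 * (Vpot lam β x - Vpot lam β y))
      = exp (-2 * Vpot lam β y) * (exp (-2 * Vpot lam β x))⁻¹ := fun y => by
    rw [← exp_neg, ← exp_add]; congr 1; ring
  have hc' : 0 < lam * (β / 4) := by rw [← mul_div_assoc]; positivity
  simp_rw [hsplit, integral_mul_const, exp_neg_two_mul_Vpot,
    integral_Iic_cosh_mul_exp_mul_sinh hc']
  have := (cosh_pos x).ne'
  field_simp

theorem meanExit_eq {lam β : ℝ} (hc : 0 < lam * β) (r : ℝ) :
    meanExit lam β r = 8 / (lam * β) * (π / 2 - arctan (sinh r)) := by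
  rw [meanExit, setIntegral_congr_fun measurableSet_Ioi
    (fun x _ => integral_Iic_exp_two_mul_Vpot_sub hc x), integral_const_mul,
    integral_Ioi_inv_cosh]
  ring

/-- For starting points `r_β → −∞`, the mean exit time satisfies
`t_β(r_β) ∼ 8π/(βλ)` as `β → 0`. -/
theorem stmt_9 (lam : ℝ) (hlam : 0 < lam) (r : ℝ → ℝ)
    (hr : Tendsto r (𝓝[>] (0 : ℝ)) atBot) :
    Tendsto (fun β => β * lam * meanExit lam β (r β) / (8 * π))
      (𝓝[>] (0 : ℝ)) (𝓝 1) := by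
  have harctan : Tendsto (fun β => arctan (sinh (r β))) (𝓝[>] 0) (𝓝 (-(π / 2))) :=
    ((tendsto_nhds_of_tendsto_nhdsWithin tendsto_arctan_atBot).comp tendsto_sinh_atBot).comp hr
  have hlim : Tendsto (fun β => (π / 2 - arctan (sinh (r β))) / π) (𝓝[>] 0) (𝓝 1) := by
    convert (harctan.const_sub (π / 2)).div_const π using 2
    field_simp
    ring
  refine hlim.congr' ?_
  filter_upwards [self_mem_nhdsWithin] with β (hβ : 0 < β)
  rw [meanExit_eq (by positivity) (r β)]
  field_simp
end
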